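/- arXiv:1601.01231 — 2 statements merged into one kernel-verified Lean document; each statement's English description precedes it below -/
import Mathlib

section
/- Let k ≥ 1 be an integer and let G be a triangle-free bar k-visibility graph. Then every connected component of G is a caterpillar; that is, G is a disjoint union of caterpillars. -/
/-!
For `k ≥ 1`, triangle-freeness forces every point to lie on at most two bars: the three lowest
bars over a common point would see each other pairwise, the outer two through the middle one.
Then two bars see each other exactly when their `x`-intervals meet, so the graph is the
intersection graph of intervals of ply at most two. In such a graph a vertex has at most one
neighbour whose interval starts no later than its own, which rules out cycles; and in a
connected component, a path from the interval starting first to the interval ending last covers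
the union of all intervals, hence dominates every vertex.
-/

/-- Adjacency (before symmetrization) in the bar `k`-visibility representation
with bars `[l i, r i] × {y i}`: there is a vertical line of sight at abscissa `x`
between bars `i` and `j` crossing at most `k` intervening bars. -/
def barAdj (k : ℕ) {n : ℕ} (l r y : Fin n → ℝ) (i j : Fin n) : Prop :=
  ∃ x : ℝ, l i ≤ x ∧ x ≤ r i ∧ l j ≤ x ∧ x ≤ r j ∧
    ({m : Fin n | min (y i) (y j) < y m ∧ y m < max (y i) (y j) ∧
        l m ≤ x ∧ x ≤ r m}.ncard ≤ k)

/-- The bar `k`-visibility graph of the representation `(l, r, y)`. -/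
def barGraph (k : ℕ) {n : ℕ} (l r y : Fin n → ℝ) : SimpleGraph (Fin n) :=
  SimpleGraph.fromRel (barAdj k l r y)

/-- A graph is a bar `k`-visibility graph if it is isomorphic to the bar
`k`-visibility graph of some representation: finitely many nondegenerate bars
at pairwise distinct heights. -/
def IsBarKVisibilityGraph (k : ℕ) {V : Type*} (G : SimpleGraph V) : Prop :=
  ∃ (n : ℕ) (l r y : Fin n → ℝ), (∀ i, l i < r i) ∧ Function.Injective y ∧
    Nonempty (G ≃g barGraph k l r y)

/-- A caterpillar: a tree containing a path such that every vertex is within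
distance 1 of some vertex of the path. -/
def IsCaterpillar {W : Type*} (H : SimpleGraph W) : Prop :=
  H.IsTree ∧ ∃ (u v : W) (p : H.Walk u v), p.IsPath ∧
    ∀ w : W, ∃ x ∈ p.support, w = x ∨ H.Adj w x

open SimpleGraph Set

section IntervalGraph

variable {α W : Type*} [LinearOrder α] {L R : W → α}

def intervalGraph (L R : W → α) : SimpleGraph W where
  Adj u v := u ≠ v ∧ L u ≤ R v ∧ L v ≤ R u
  symm := ⟨fun _ _ h => ⟨h.1.symm, h.2.2, h.2.1⟩⟩
  loopless := ⟨fun _ h => h.1 rfl⟩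

@[simp]
lemma intervalGraph_adj {u v : W} :
    (intervalGraph L R).Adj u v ↔ u ≠ v ∧ L u ≤ R v ∧ L v ≤ R u :=
  Iff.rfl

def PlyLeTwo (L R : W → α) : Prop :=
  ∀ x u v w, x ∈ Icc (L u) (R u) → x ∈ Icc (L v) (R v) → x ∈ Icc (L w) (R w) →
    u = v ∨ u = w ∨ v = w

lemma PlyLeTwo.comp {W' : Type*} (h : PlyLeTwo L R) {f : W' → W} (hf : Function.Injective f) :
    PlyLeTwo (L ∘ f) (R ∘ f) := by
  intro x u v w hu hv hw
  simpa only [hf.eq_iff] using h x (f u) (f v) (f w) hu hv hw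

lemma comap_intervalGraph {W' : Type*} {f : W' → W} (hf : Function.Injective f) :
    (intervalGraph L R).comap f = intervalGraph (L ∘ f) (R ∘ f) := by
  ext u v
  simp [intervalGraph, hf.ne_iff]

/-- The point `L v` lies in the intervals of `u`, `w` and `v`. -/
lemma PlyLeTwo.eq_of_adj_of_le (h : PlyLeTwo L R) (hLR : ∀ v, L v ≤ R v) {u v w : W}
    (hu : (intervalGraph L R).Adj u v) (hw : (intervalGraph L R).Adj w v)
    (huv : L u ≤ L v) (hwv : L w ≤ L v) : u = w := by
  rw [intervalGraph_adj] at hu hw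
  rcases h (L v) u w v ⟨huv, hu.2.2⟩ ⟨hwv, hw.2.2⟩ ⟨le_rfl, hLR v⟩ with h | h | h
  · exact h
  · exact absurd h hu.1
  · exact absurd h hw.1

theorem PlyLeTwo.isAcyclic (h : PlyLeTwo L R) (hLR : ∀ v, L v ≤ R v) :
    (intervalGraph L R).IsAcyclic := by
  classical
  intro a c hc
  obtain ⟨v, hv, hmax⟩ := c.support.toFinset.exists_max_image L ⟨a, by simp⟩
  rw [List.mem_toFinset] at hv
  set c' := c.rotate v hv
  have hc' : c'.IsCycle := hc.rotate hv
  have hle : ∀ w ∈ c'.support, L w ≤ L v := fun w hw =>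
    hmax w (List.mem_toFinset.2 ((c.mem_support_rotate_iff v hv).1 hw))
  exact hc'.snd_ne_penultimate <| h.eq_of_adj_of_le hLR
    (c'.adj_snd hc'.not_nil).symm (c'.adj_penultimate hc'.not_nil)
    (hle _ (c'.getVert_mem_support _)) (hle _ (c'.getVert_mem_support _))

lemma SimpleGraph.Walk.exists_mem_support_mem_Icc {u v : W}
    (p : (intervalGraph L R).Walk u v) {t : α} (hu : L u ≤ t) (hv : t ≤ R v) : ∃ z ∈ p.support, t ∈ Icc (L z) (R z) := by
  induction p with
  | nil => exact ⟨_, by simp, hu, hv⟩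
  | @cons u w v huw q ih =>
    by_cases ht : t ≤ R u
    · exact ⟨u, by simp, hu, ht⟩
    · obtain ⟨z, hz, hzt⟩ := ih ((intervalGraph_adj.1 huw).2.2.trans (not_le.1 ht).le) hv
      exact ⟨z, by simp [hz], hzt⟩

theorem PlyLeTwo.isCaterpillar [Finite W] (h : PlyLeTwo L R) (hLR : ∀ v, L v ≤ R v)
    (hconn : (intervalGraph L R).Connected) : IsCaterpillar (intervalGraph L R) := by
  classical
  have := hconn.nonempty
  obtain ⟨a, ha⟩ := Finite.exists_min L
  obtain ⟨b, hb⟩ := Finite.exists_max R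
  obtain ⟨p, hp⟩ := (hconn a b).some.toPath
  refine ⟨⟨hconn, h.isAcyclic hLR⟩, a, b, p, hp, fun w => ?_⟩
  obtain ⟨z, hz, hzw⟩ := p.exists_mem_support_mem_Icc (ha w) ((hLR w).trans (hb w))
  exact ⟨z, hz, (eq_or_ne w z).imp_right fun hwz => ⟨hwz, hzw.2, hzw.1.trans (hLR w)⟩⟩

end IntervalGraph

lemma exists_three_lowest {ι β : Type*} [LinearOrder β] {f : ι → β} (hf : Function.Injective f)
    {S : Finset ι} (hS : 3 ≤ S.card) :
    ∃ a ∈ S, ∃ b ∈ S, ∃ c ∈ S, f a < f b ∧ f b < f c ∧ ∀ m ∈ S, f m < f c → m = a ∨ m = b := by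
  classical
  obtain ⟨a, ha, hamin⟩ := S.exists_min_image f (Finset.card_pos.1 (by omega))
  obtain ⟨b, hb, hbmin⟩ := (S.erase a).exists_min_image f
    (Finset.card_pos.1 (by rw [Finset.card_erase_of_mem ha]; omega))
  obtain ⟨c, hc, hcmin⟩ := ((S.erase a).erase b).exists_min_image f
    (Finset.card_pos.1 (by rw [Finset.card_erase_of_mem hb, Finset.card_erase_of_mem ha]; omega))
  simp only [Finset.mem_erase] at hb hc hbmin hcmin
  refine ⟨a, ha, b, hb.2, c, hc.2.2, (hamin b hb.2).lt_of_ne (hf.ne hb.1.symm),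
    (hbmin c ⟨hc.2.1, hc.2.2⟩).lt_of_ne (hf.ne hc.1.symm), fun m hm hmc => ?_⟩
  by_contra! hne
  exact (hcmin m ⟨hne.2, hne.1, hm⟩).not_gt hmc

section BarGraph

variable {k n : ℕ} {l r y : Fin n → ℝ}

lemma barGraph_adj_of_mem_Icc (hk : 1 ≤ k) {i j b : Fin n} {x : ℝ} (hi : x ∈ Icc (l i) (r i))
    (hj : x ∈ Icc (l j) (r j)) (hij : y i < y j)
    (hb : ∀ m, y i < y m → y m < y j → x ∈ Icc (l m) (r m) → m = b) :
    (barGraph k l r y).Adj i j := by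
  refine (fromRel_adj _ _ _).2
    ⟨fun h => hij.ne (congrArg y h), Or.inl ⟨x, hi.1, hi.2, hj.1, hj.2, ?_⟩⟩
  rw [min_eq_left hij.le, max_eq_right hij.le]
  calc _ ≤ ({b} : Set (Fin n)).ncard :=
        Set.ncard_le_ncard (fun m hm => hb m hm.1 hm.2.1 hm.2.2) (Set.finite_singleton b)
    _ ≤ k := by rwa [Set.ncard_singleton]

theorem plyLeTwo_of_cliqueFree (hk : 1 ≤ k) (hy : Function.Injective y)
    (h : (barGraph k l r y).CliqueFree 3) : PlyLeTwo l r := by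
  classical
  intro x u v w hu hv hw
  by_contra! hne
  set S := Finset.univ.filter fun m => x ∈ Icc (l m) (r m)
  have hS : 3 ≤ S.card :=
    calc 3 = ({u, v, w} : Finset (Fin n)).card :=
          (Finset.card_eq_three.2 ⟨u, v, w, hne.1, hne.2.1, hne.2.2, rfl⟩).symm
      _ ≤ S.card := Finset.card_le_card fun m => by
          simp only [Finset.mem_insert, Finset.mem_singleton, S, Finset.mem_filter,
            Finset.mem_univ, true_and]
          rintro (rfl | rfl | rfl) <;> assumption
  obtain ⟨a, ha, b, hb, c, hc, hab, hbc, hlow⟩ := exists_three_lowest hy hS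
  have only_b : ∀ {i j}, y a ≤ y i → y j ≤ y c →
      ∀ m, y i < y m → y m < y j → x ∈ Icc (l m) (r m) → m = b := fun hi hj m h1 h2 hm =>
    (hlow m (by simpa [S] using hm) (h2.trans_le hj)).resolve_left
      (by rintro rfl; exact (hi.trans_lt h1).false)
  simp only [S, Finset.mem_filter, Finset.mem_univ, true_and] at ha hb hc
  exact h {a, b, c} <| is3Clique_triple_iff.2
    ⟨barGraph_adj_of_mem_Icc hk ha hb hab (only_b le_rfl hbc.le),
      barGraph_adj_of_mem_Icc hk ha hc (hab.trans hbc) (only_b le_rfl le_rfl),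
      barGraph_adj_of_mem_Icc hk hb hc hbc (only_b hab.le le_rfl)⟩

/-- A line of sight at a common abscissa of two bars crosses no third bar. -/
theorem barGraph_eq_intervalGraph (hk : 1 ≤ k) (hy : Function.Injective y)
    (hlr : ∀ i, l i ≤ r i) (h : PlyLeTwo l r) : barGraph k l r y = intervalGraph l r := by
  ext i j
  rw [intervalGraph_adj]
  constructor
  · rintro ⟨hne, ⟨x, h1, h2, h3, h4, -⟩ | ⟨x, h1, h2, h3, h4, -⟩⟩
    · exact ⟨hne, h1.trans h4, h3.trans h2⟩
    · exact ⟨hne, h3.trans h2, h1.trans h4⟩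
  · rintro ⟨hne, hij, hji⟩
    have hxi : max (l i) (l j) ∈ Icc (l i) (r i) := ⟨le_max_left _ _, max_le (hlr i) hji⟩
    have hxj : max (l i) (l j) ∈ Icc (l j) (r j) := ⟨le_max_right _ _, max_le hij (hlr j)⟩
    have hij_only : ∀ m, max (l i) (l j) ∈ Icc (l m) (r m) → m = i ∨ m = j := fun m hm => by
      rcases h _ i j m hxi hxj hm with he | he | he
      exacts [absurd he hne, Or.inl he.symm, Or.inr he.symm]
    rcases (hy.ne hne).lt_or_gt with hlt | hlt
    · exact barGraph_adj_of_mem_Icc hk hxi hxj hlt fun m _ h2 hm =>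
        (hij_only m hm).resolve_right (by rintro rfl; exact h2.false)
    · exact (barGraph_adj_of_mem_Icc hk hxj hxi hlt fun m _ h2 hm =>
        (hij_only m hm).resolve_left (by rintro rfl; exact h2.false)).symm

end BarGraph

/-- For `k ≥ 1`, every triangle-free bar `k`-visibility graph is a disjoint
union of caterpillars: each of its connected components is a caterpillar. -/
theorem triangleFree_bar_k_visibility_caterpillar (k : ℕ) (hk : 1 ≤ k)
    {V : Type*} [Fintype V] (G : SimpleGraph V)
    (htri : G.CliqueFree 3) (hbar : IsBarKVisibilityGraph k G) :
    ∀ c : G.ConnectedComponent, IsCaterpillar (G.induce c.supp) := by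
  obtain ⟨n, l, r, y, hlr, hy, ⟨e⟩⟩ := hbar
  have hply : PlyLeTwo l r := plyLeTwo_of_cliqueFree hk hy (htri.comap e.symm.isContained)
  have hG : G = intervalGraph (l ∘ e) (r ∘ e) := by
    rw [← comap_intervalGraph e.injective,
      ← barGraph_eq_intervalGraph hk hy (fun i => (hlr i).le) hply]
    ext u v
    exact e.map_adj_iff.symm
  intro c
  have hc : (G.induce c.supp).Connected := c.connected_toSimpleGraph
  generalize c.supp = s at hc ⊢
  rw [induce, hG, comap_intervalGraph (Function.Embedding.subtype _).injective] at hc ⊢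
  exact (hply.comp (e.injective.comp (Function.Embedding.subtype _).injective)).isCaterpillar
    (fun _ => (hlr _).le) hc
end

section
/- For all integers i, j ≥ 0, the family of arc j-visibility graphs is not contained in the family of bar i-visibility graphs: there exists a finite simple graph that is an arc j-visibility graph but is not isomorphic to any bar i-visibility graph. -/
open Real

/-- Membership of the angle `φ` (taken mod `2π`) in the closed circular arc
starting at angle `s` and extending counterclockwise through angular length `L`. -/
def arcMem (s L φ : ℝ) : Prop :=
  ∃ t : ℝ, 0 ≤ t ∧ t ≤ L ∧ ∃ z : ℤ, φ = s + t + 2 * π * z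

/-- `L` describes a valid arc `k`-visibility representation: each arc is a
nonempty proper closed arc, i.e. spans an angle in `[0, 2π)`. -/
def IsArcRep {n : ℕ} (L : Fin n → ℝ) : Prop :=
  ∀ i, 0 ≤ L i ∧ L i < 2 * π

/-- Adjacency condition for `i < j` in the arc `k`-visibility representation with
start angles `s` and lengths `L`: either (a) a radial line of sight crossing at
most `k` intervening arcs, or (b) a line of sight through the center crossing at
most `k` other arcs (an arc crossed on both sides counted once). -/
def arcAdj (k : ℕ) {n : ℕ} (s L : Fin n → ℝ) (i j : Fin n) : Prop :=
  (∃ φ : ℝ, arcMem (s i) (L i) φ ∧ arcMem (s j) (L j) φ ∧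
      ({m : Fin n | i < m ∧ m < j ∧ arcMem (s m) (L m) φ}.ncard ≤ k))
  ∨ (∃ φ : ℝ, arcMem (s i) (L i) φ ∧ arcMem (s j) (L j) (φ + π) ∧
      ({m : Fin n | m ≠ i ∧ m ≠ j ∧
          ((m < i ∧ arcMem (s m) (L m) φ) ∨ (m < j ∧ arcMem (s m) (L m) (φ + π)))}.ncard ≤ k))

/-- The arc `k`-visibility graph of the representation `(s, L)`. -/
def arcGraph (k : ℕ) {n : ℕ} (s L : Fin n → ℝ) : SimpleGraph (Fin n) :=
  SimpleGraph.fromRel (fun i j => i < j ∧ arcAdj k s L i j)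

/-- A graph is an arc `k`-visibility graph if it is isomorphic to the arc
`k`-visibility graph of some representation. -/
def IsArcKVisibilityGraph (k : ℕ) {V : Type*} (G : SimpleGraph V) : Prop :=
  ∃ (n : ℕ) (s L : Fin n → ℝ), IsArcRep L ∧ Nonempty (G ≃g arcGraph k s L)

/-!
For `i = 0` the witness is `K₅`, for `i ≥ 1` it is `C₄`. Both are arc `j`-visibility graphs for
every `j`: every edge has a line of sight crossing no arc, and the arcs of a non-edge admit no line
of sight at all.

`K₅` is not a bar `0`-visibility graph. Five pairwise visible bars share a point `x₀`. A line of
sight between two bars that skips a bar (in height order) misses that bar, hence lies strictly to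
one side of `x₀`; for crossing pairs `p < p' < q < q'` the two lines lie on opposite sides. The
five skipping pairs form an odd cycle under crossing.

`C₄ = s a t b` is not a bar `k`-visibility graph for `k ≥ 1`. If the bars `a` and `b` share an
abscissa `x`, then, `s` and `t` being the only other bars, both lie between `a` and `b` and cover
`x`, so nothing separates `s` from `t` at `x`. Otherwise `s` and `t` both cover the gap between `a`
and `b` and see each other through it.
-/

open Set

section Arcs

variable {s s₁ s₂ L L₁ L₂ φ c : ℝ}

theorem arcMem_add_iff : arcMem s L (φ + c) ↔ arcMem (s - c) L φ :=
  exists_congr fun t => and_congr_right fun _ => and_congr_right fun _ =>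
    exists_congr fun z => by constructor <;> intro h <;> linarith

theorem arcMem_or_arcMem_of_arcMem_of_arcMem (h₁ : arcMem s₁ L₁ φ) (h₂ : arcMem s₂ L₂ φ) :
    arcMem s₂ L₂ s₁ ∨ arcMem s₁ L₁ s₂ := by
  obtain ⟨t₁, ht₁, ht₁L, z₁, rfl⟩ := h₁
  obtain ⟨t₂, ht₂, ht₂L, z₂, h⟩ := h₂
  rcases le_total t₁ t₂ with ht | ht
  · exact Or.inl ⟨t₂ - t₁, by linarith, by linarith, z₂ - z₁, by push_cast; linarith⟩
  · exact Or.inr ⟨t₁ - t₂, by linarith, by linarith, z₁ - z₂, by push_cast; linarith⟩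

end Arcs

section ArcAdj

variable {k n : ℕ} {s L : Fin n → ℝ} {i j : Fin n} {φ : ℝ}

theorem arcAdj_of_radial (hi : arcMem (s i) (L i) φ) (hj : arcMem (s j) (L j) φ)
    (hm : ∀ m, i < m → m < j → ¬ arcMem (s m) (L m) φ) : arcAdj k s L i j := by
  refine Or.inl ⟨φ, hi, hj, ?_⟩
  refine ((ncard_eq_zero (toFinite _)).2 <| eq_empty_of_forall_notMem ?_).trans_le k.zero_le
  exact fun m ⟨him, hmj, hφ⟩ => hm m him hmj hφ

theorem arcAdj_of_central (hi : arcMem (s i) (L i) φ) (hj : arcMem (s j) (L j) (φ + π))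
    (hm : ∀ m, m < i → ¬ arcMem (s m) (L m) φ)
    (hm' : ∀ m, m < j → m ≠ i → ¬ arcMem (s m) (L m) (φ + π)) : arcAdj k s L i j := by
  refine Or.inr ⟨φ, hi, hj, ?_⟩
  refine ((ncard_eq_zero (toFinite _)).2 <| eq_empty_of_forall_notMem ?_).trans_le k.zero_le
  rintro m ⟨hmi, -, ⟨hmi', hφ⟩ | ⟨hmj, hφ⟩⟩
  exacts [hm m hmi' hφ, hm' m hmj hmi hφ]

theorem not_arcAdj_of_not_arcMem (h₁ : ¬ arcMem (s j) (L j) (s i))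
    (h₂ : ¬ arcMem (s i) (L i) (s j)) (h₃ : ¬ arcMem (s j) (L j) (s i + π))
    (h₄ : ¬ arcMem (s i) (L i) (s j - π)) : ¬ arcAdj k s L i j := by
  rintro (⟨φ, hi, hj, -⟩ | ⟨φ, hi, hj, -⟩)
  · exact (arcMem_or_arcMem_of_arcMem_of_arcMem hi hj).elim h₁ h₂
  · rw [arcMem_add_iff] at hj
    rcases arcMem_or_arcMem_of_arcMem_of_arcMem hi hj with h | h
    exacts [h₃ (arcMem_add_iff.2 h), h₄ h]

theorem arcGraph_eq_of_forall_lt {G : SimpleGraph (Fin n)}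
    (h : ∀ i j, i < j → (arcAdj k s L i j ↔ G.Adj i j)) : arcGraph k s L = G := by
  ext i j
  simp only [arcGraph, SimpleGraph.fromRel_adj]
  rcases lt_trichotomy i j with hij | rfl | hij
  · simp [hij, hij.ne, hij.not_gt, h i j hij]
  · simp
  · simp [hij, hij.ne', hij.not_gt, h j i hij, G.adj_comm]

end ArcAdj

section Grid

noncomputable def gridAngle (h : ℕ) (c : ℤ) : ℝ := π / h * c

variable {h : ℕ}

theorem gridAngle_add_pi (hh : 0 < h) (c : ℤ) : gridAngle h c + π = gridAngle h (c + h) := by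
  simp only [gridAngle]; push_cast; field_simp

theorem gridAngle_sub_pi (hh : 0 < h) (c : ℤ) : gridAngle h c - π = gridAngle h (c - h) := by
  simp only [gridAngle]; push_cast; field_simp

theorem arcMem_gridAngle_iff (hh : 0 < h) {a b c : ℤ} (hb : b < 2 * h) :
    arcMem (gridAngle h a) (gridAngle h b) (gridAngle h c) ↔ (c - a) % (2 * h) ≤ b := by
  have hu : 0 < π / h := div_pos pi_pos (by exact_mod_cast hh)
  constructor
  · rintro ⟨t, ht, htb, z, hz⟩
    have htw : t = π / h * (c - a - 2 * h * z : ℤ) := by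
      simp only [gridAngle] at hz; push_cast; field_simp at hz ⊢; linarith
    have hw₀ : 0 ≤ c - a - 2 * h * z := by
      exact_mod_cast (mul_nonneg_iff_of_pos_left hu).1 (htw ▸ ht)
    have hwb : c - a - 2 * h * z ≤ b := by
      exact_mod_cast le_of_mul_le_mul_left (htw ▸ htb) hu
    rwa [show c - a = c - a - 2 * h * z + 2 * h * z by ring, Int.add_mul_emod_self_left,
      Int.emod_eq_of_lt hw₀ (hwb.trans_lt hb)]
  · intro hw
    refine ⟨π / h * ((c - a) % (2 * h) : ℤ), mul_nonneg hu.le ?_,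
      mul_le_mul_of_nonneg_left (by exact_mod_cast hw) hu.le, (c - a) / (2 * h), ?_⟩
    · exact_mod_cast Int.emod_nonneg _ (by omega)
    · have key : (((c - a) % (2 * h) : ℤ) : ℝ) + 2 * h * ((c - a) / (2 * h) : ℤ) = c - a := by
        exact_mod_cast Int.emod_add_mul_ediv (c - a) (2 * h)
      simp only [gridAngle]
      field_simp
      linear_combination -key

end Grid

/- Arc `m` starts at the angle `π a m / h` and spans `π b m / h`. Grid angles are counted in units
of `π / h`, so `c + h` is antipodal to `c`. By `arcMem_or_arcMem_of_arcMem_of_arcMem`, two arcs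
that meet contain one another's start, so separation is tested at the starts only. -/

section GridRepresentation

variable {n : ℕ} (h : ℕ) (a b : Fin n → ℤ)

def OnGridArc (m : Fin n) (c : ℤ) : Prop := (c - a m) % (2 * h) ≤ b m

def GridRadialSight (i j : Fin n) (c : ℤ) : Prop :=
  OnGridArc h a b i c ∧ OnGridArc h a b j c ∧ ∀ m, i < m → m < j → ¬ OnGridArc h a b m c

def GridCentralSight (i j : Fin n) (c : ℤ) : Prop :=
  OnGridArc h a b i c ∧ OnGridArc h a b j (c + h) ∧ (∀ m, m < i → ¬ OnGridArc h a b m c) ∧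
    ∀ m, m < j → m ≠ i → ¬ OnGridArc h a b m (c + h)

def GridSeparated (i j : Fin n) : Prop :=
  ¬ OnGridArc h a b j (a i) ∧ ¬ OnGridArc h a b i (a j) ∧
    ¬ OnGridArc h a b j (a i + h) ∧ ¬ OnGridArc h a b i (a j - h)

instance (m : Fin n) (c : ℤ) : Decidable (OnGridArc h a b m c) := by
  unfold OnGridArc; infer_instance

instance (i j : Fin n) (c : ℤ) : Decidable (GridRadialSight h a b i j c) := by
  unfold GridRadialSight; infer_instance

instance (i j : Fin n) (c : ℤ) : Decidable (GridCentralSight h a b i j c) := by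
  unfold GridCentralSight; infer_instance

instance (i j : Fin n) : Decidable (GridSeparated h a b i j) := by
  unfold GridSeparated; infer_instance

variable {h a b} {k : ℕ} {i j : Fin n} {c : ℤ}

theorem arcMem_gridAngle_iff_onGridArc (hh : 0 < h) (hb : ∀ m, b m < 2 * h) (m : Fin n) :
    arcMem ((gridAngle h ∘ a) m) ((gridAngle h ∘ b) m) (gridAngle h c) ↔ OnGridArc h a b m c :=
  arcMem_gridAngle_iff hh (hb m)

theorem arcAdj_of_gridRadialSight (hh : 0 < h) (hb : ∀ m, b m < 2 * h)
    (hc : GridRadialSight h a b i j c) : arcAdj k (gridAngle h ∘ a) (gridAngle h ∘ b) i j := by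
  simp only [GridRadialSight, ← arcMem_gridAngle_iff_onGridArc hh hb] at hc
  exact arcAdj_of_radial hc.1 hc.2.1 hc.2.2

theorem arcAdj_of_gridCentralSight (hh : 0 < h) (hb : ∀ m, b m < 2 * h)
    (hc : GridCentralSight h a b i j c) : arcAdj k (gridAngle h ∘ a) (gridAngle h ∘ b) i j := by
  simp only [GridCentralSight, ← arcMem_gridAngle_iff_onGridArc hh hb,
    ← gridAngle_add_pi hh] at hc
  exact arcAdj_of_central hc.1 hc.2.1 hc.2.2.1 hc.2.2.2

theorem not_arcAdj_of_gridSeparated (hh : 0 < h) (hb : ∀ m, b m < 2 * h)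
    (hij : GridSeparated h a b i j) : ¬ arcAdj k (gridAngle h ∘ a) (gridAngle h ∘ b) i j := by
  simp only [GridSeparated, ← arcMem_gridAngle_iff_onGridArc hh hb,
    ← gridAngle_add_pi hh, ← gridAngle_sub_pi hh] at hij
  exact not_arcAdj_of_not_arcMem hij.1 hij.2.1 hij.2.2.1 hij.2.2.2

theorem isArcRep_comp_gridAngle (hh : 0 < h) (hb₀ : ∀ m, 0 ≤ b m) (hb : ∀ m, b m < 2 * h) :
    IsArcRep (gridAngle h ∘ b) := fun m => by
  refine ⟨mul_nonneg (by positivity) (by exact_mod_cast hb₀ m), ?_⟩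
  calc gridAngle h (b m) < gridAngle h (2 * h) :=
        mul_lt_mul_of_pos_left (by exact_mod_cast hb m) (by positivity)
    _ = 2 * π := by simp only [gridAngle]; push_cast; field_simp

theorem arcGraph_comp_gridAngle_eq {G : SimpleGraph (Fin n)} (hh : 0 < h) (hb : ∀ m, b m < 2 * h)
    (hG : ∀ i j, i < j →
      (G.Adj i j → ∃ c : Fin (2 * h), GridRadialSight h a b i j c ∨ GridCentralSight h a b i j c) ∧
      (¬ G.Adj i j → GridSeparated h a b i j)) :
    arcGraph k (gridAngle h ∘ a) (gridAngle h ∘ b) = G := by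
  refine arcGraph_eq_of_forall_lt fun i j hij => ?_
  by_cases hadj : G.Adj i j
  · obtain ⟨c, hc | hc⟩ := (hG i j hij).1 hadj
    exacts [iff_of_true (arcAdj_of_gridRadialSight hh hb hc) hadj,
      iff_of_true (arcAdj_of_gridCentralSight hh hb hc) hadj]
  · exact iff_of_false (not_arcAdj_of_gridSeparated hh hb ((hG i j hij).2 hadj)) hadj

theorem isArcKVisibilityGraph_of_grid {G : SimpleGraph (Fin n)} (hh : 0 < h)
    (hb₀ : ∀ m, 0 ≤ b m) (hb : ∀ m, b m < 2 * h)
    (hG : ∀ i j, i < j →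
      (G.Adj i j → ∃ c : Fin (2 * h), GridRadialSight h a b i j c ∨ GridCentralSight h a b i j c) ∧
      (¬ G.Adj i j → GridSeparated h a b i j)) :
    IsArcKVisibilityGraph k G := by
  refine ⟨n, gridAngle h ∘ a, gridAngle h ∘ b, isArcRep_comp_gridAngle hh hb₀ hb, ?_⟩
  rw [arcGraph_comp_gridAngle_eq hh hb hG]
  exact ⟨.refl⟩

end GridRepresentation


section Intervals

variable {α : Type*} [LinearOrder α]

theorem exists_forall_mem_Icc {ι : Type*} [Finite ι] [Nonempty ι] {l r : ι → α}
    (h : ∀ i j, l i ≤ r j) : ∃ x, ∀ i, x ∈ Icc (l i) (r i) := by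
  obtain ⟨i₀, hi₀⟩ := Finite.exists_max l
  exact ⟨l i₀, fun i => ⟨hi₀ i, h i₀ i⟩⟩

theorem lt_iff_not_lt_of_mem_sdiff {a b c d x₀ x x' : α} (h₀ : x₀ ∈ Icc a b ∩ Icc c d)
    (hx : x ∈ Icc c d \ Icc a b) (hx' : x' ∈ Icc a b \ Icc c d) : x₀ < x ↔ ¬ x₀ < x' := by
  simp only [mem_inter_iff, mem_sdiff, mem_Icc, not_and_or, not_le] at h₀ hx hx'
  rcases hx.2 with hx₁ | hx₁ <;> rcases hx'.2 with hx₂ | hx₂ <;> constructor <;> intro <;> order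

theorem notMem_uIoo_of_mem_uIoo {a b c d : α} (hc : c ∈ uIoo a b) (hd : d ∈ uIoo a b) :
    a ∉ uIoo c d := fun ha =>
  left_notMem_uIoo (uIoo_subset_Ioo (Ioo_subset_Icc_self hc) (Ioo_subset_Icc_self hd) ha)

end Intervals

section BarAdj

variable {k n : ℕ} {l r y : Fin n → ℝ} {a b c d s t : Fin n} {x : ℝ}

theorem barAdj_symm (h : barAdj k l r y a b) : barAdj k l r y b a := by
  obtain ⟨x, ha₁, ha₂, hb₁, hb₂, hk⟩ := h
  exact ⟨x, hb₁, hb₂, ha₁, ha₂, by rwa [min_comm, max_comm]⟩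

theorem barGraph_adj : (barGraph k l r y).Adj a b ↔ a ≠ b ∧ barAdj k l r y a b := by
  rw [barGraph, SimpleGraph.fromRel_adj, or_iff_left_of_imp barAdj_symm]

theorem barAdj_of_forall_mem_finset (u : Finset (Fin n)) (hu : u.card ≤ k)
    (ha : x ∈ Icc (l a) (r a)) (hb : x ∈ Icc (l b) (r b))
    (h : ∀ m, y m ∈ uIoo (y a) (y b) → x ∈ Icc (l m) (r m) → m ∈ u) : barAdj k l r y a b := by
  refine ⟨x, ha.1, ha.2, hb.1, hb.2, le_trans ?_ ((ncard_coe_finset u).trans_le hu)⟩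
  exact ncard_le_ncard (fun m hm => h m ⟨hm.1, hm.2.1⟩ hm.2.2) u.finite_toSet

theorem exists_mem_Icc_of_barAdj_zero (h : barAdj 0 l r y a b) :
    ∃ x ∈ Icc (l a) (r a) ∩ Icc (l b) (r b),
      ∀ m, y m ∈ uIoo (y a) (y b) → x ∉ Icc (l m) (r m) := by
  obtain ⟨x, ha₁, ha₂, hb₁, hb₂, hk⟩ := h
  have hempty := (ncard_eq_zero (toFinite _)).1 (Nat.le_zero.1 hk)
  exact ⟨x, ⟨⟨ha₁, ha₂⟩, hb₁, hb₂⟩, fun m hm hx =>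
    eq_empty_iff_forall_notMem.1 hempty m ⟨hm.1, hm.2, hx.1, hx.2⟩⟩

theorem not_forall_barAdj_zero_of_strictMono (hlr : ∀ m, l m ≤ r m) {u : Fin 5 → Fin n}
    (hu : StrictMono (y ∘ u)) : ¬ ∀ p q, p ≠ q → barAdj 0 l r y (u p) (u q) := by
  intro hadj
  choose! x hx hblock using fun p q (hpq : p ≠ q) => exists_mem_Icc_of_barAdj_zero (hadj p q hpq)
  obtain ⟨x₀, hx₀⟩ := exists_forall_mem_Icc (l := l ∘ u) (r := r ∘ u) fun p q => by
    rcases eq_or_ne p q with rfl | hpq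
    exacts [hlr _, (hx p q hpq).1.1.trans (hx p q hpq).2.2]
  have cross : ∀ p p' q q' : Fin 5, p < p' → p' < q → q < q' →
      (x₀ < x p q ↔ ¬ x₀ < x p' q') := fun p p' q q' h₁ h₂ h₃ =>
    have hpq := (h₁.trans h₂).ne
    have hpq' := (h₂.trans h₃).ne
    lt_iff_not_lt_of_mem_sdiff ⟨hx₀ p', hx₀ q⟩
      ⟨(hx p q hpq).2, hblock p q hpq (u p') (mem_uIoo_of_lt (hu h₁) (hu h₂))⟩
      ⟨(hx p' q' hpq').1, hblock p' q' hpq' (u q) (mem_uIoo_of_lt (hu h₂) (hu h₃))⟩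
  -- the pairs `(0, 2), (1, 3), (2, 4), (0, 3), (1, 4)` form an odd cycle under crossing
  have := cross 0 1 2 3 (by decide) (by decide) (by decide)
  have := cross 1 2 3 4 (by decide) (by decide) (by decide)
  have := cross 0 2 3 4 (by decide) (by decide) (by decide)
  have := cross 0 1 3 4 (by decide) (by decide) (by decide)
  have := cross 0 1 2 4 (by decide) (by decide) (by decide)
  tauto

theorem mem_uIoo_and_mem_Icc_of_not_barAdj (hk : 1 ≤ k) (hall : ∀ m, m = c ∨ m = d ∨ m = a ∨ m = b)
    (ha : x ∈ Icc (l a) (r a)) (hb : x ∈ Icc (l b) (r b)) (hab : ¬ barAdj k l r y a b) :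
    y c ∈ uIoo (y a) (y b) ∧ x ∈ Icc (l c) (r c) := by
  by_contra hc
  refine hab (barAdj_of_forall_mem_finset {d} (by simpa using hk) ha hb fun m hm hxm => ?_)
  rcases hall m with rfl | rfl | rfl | rfl
  · exact absurd ⟨hm, hxm⟩ hc
  · exact Finset.mem_singleton_self _
  · exact absurd hm left_notMem_uIoo
  · exact absurd hm right_notMem_uIoo

theorem barAdj_or_barAdj_of_mem_Icc (hk : 1 ≤ k) (hall : ∀ m, m = s ∨ m = t ∨ m = a ∨ m = b)
    (ha : x ∈ Icc (l a) (r a)) (hb : x ∈ Icc (l b) (r b)) :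
    barAdj k l r y s t ∨ barAdj k l r y a b := by
  refine or_iff_not_imp_right.2 fun hab => ?_
  obtain ⟨hs, hxs⟩ := mem_uIoo_and_mem_Icc_of_not_barAdj hk hall ha hb hab
  obtain ⟨ht, hxt⟩ := mem_uIoo_and_mem_Icc_of_not_barAdj (c := t) (d := s) hk
    (fun m => by have := hall m; tauto) ha hb hab
  refine barAdj_of_forall_mem_finset ∅ (Nat.zero_le k) hxs hxt fun m hm _ => ?_
  rcases hall m with rfl | rfl | rfl | rfl
  · exact absurd hm left_notMem_uIoo
  · exact absurd hm right_notMem_uIoo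
  · exact absurd hm (notMem_uIoo_of_mem_uIoo hs ht)
  · rw [uIoo_comm (y a)] at hs ht
    exact absurd hm (notMem_uIoo_of_mem_uIoo hs ht)

theorem barAdj_of_barAdj_of_lt (hall : ∀ m, m = s ∨ m = t ∨ m = a ∨ m = b)
    (hsa : barAdj k l r y s a) (hsb : barAdj k l r y s b)
    (hta : barAdj k l r y t a) (htb : barAdj k l r y t b) (hab : r a < l b) :
    barAdj k l r y s t := by
  have hgap : ∀ c, barAdj k l r y c a → barAdj k l r y c b →
      (r a + l b) / 2 ∈ Icc (l c) (r c) := by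
    rintro c ⟨x₁, hc₁, -, -, ha₂, -⟩ ⟨x₂, -, hc₂, hb₁, -, -⟩
    constructor <;> linarith
  refine barAdj_of_forall_mem_finset ∅ (Nat.zero_le k) (hgap s hsa hsb) (hgap t hta htb)
    fun m hm hxm => ?_
  rcases hall m with rfl | rfl | rfl | rfl
  · exact absurd hm left_notMem_uIoo
  · exact absurd hm right_notMem_uIoo
  · linarith [hxm.2]
  · linarith [hxm.1]

theorem barAdj_or_barAdj_of_four_cycle (hk : 1 ≤ k) (hall : ∀ m, m = s ∨ m = t ∨ m = a ∨ m = b)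
    (hsa : barAdj k l r y s a) (hsb : barAdj k l r y s b)
    (hta : barAdj k l r y t a) (htb : barAdj k l r y t b) :
    barAdj k l r y s t ∨ barAdj k l r y a b := by
  have ha : l a ≤ r a := let ⟨_, _, _, h₁, h₂, _⟩ := hsa; h₁.trans h₂
  have hb : l b ≤ r b := let ⟨_, _, _, h₁, h₂, _⟩ := hsb; h₁.trans h₂
  rcases lt_or_ge (r a) (l b) with hab | hab
  · exact Or.inl (barAdj_of_barAdj_of_lt hall hsa hsb hta htb hab)
  rcases lt_or_ge (r b) (l a) with hba | hba
  · exact Or.inl (barAdj_of_barAdj_of_lt (fun m => by have := hall m; tauto) hsb hsa htb hta hba)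
  exact barAdj_or_barAdj_of_mem_Icc hk hall (x := max (l a) (l b))
    ⟨le_max_left _ _, max_le ha hab⟩ ⟨le_max_right _ _, max_le hba hb⟩

end BarAdj

/- The circle cut into five closed arcs of angle `2π / 5`. -/
theorem isArcKVisibilityGraph_top (k : ℕ) : IsArcKVisibilityGraph k (⊤ : SimpleGraph (Fin 5)) :=
  isArcKVisibilityGraph_of_grid (h := 10) (a := fun m => 4 * m) (b := fun _ => 4)
    (by norm_num) (by decide) (by decide) (by decide)

/- Four consecutive arcs of angle `π / 4`; the edge `0 — 3` is seen through the centre. -/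
theorem isArcKVisibilityGraph_cycleGraph_four (k : ℕ) :
    IsArcKVisibilityGraph k (SimpleGraph.cycleGraph 4) :=
  isArcKVisibilityGraph_of_grid (h := 4) (a := fun m => m) (b := fun _ => 1)
    (by norm_num) (by decide) (by decide) (by decide)

theorem not_isBarKVisibilityGraph_zero_top :
    ¬ IsBarKVisibilityGraph 0 (⊤ : SimpleGraph (Fin 5)) := by
  rintro ⟨n, l, r, y, hlr, hy, ⟨e⟩⟩
  set σ := Tuple.sort (y ∘ e)
  refine not_forall_barAdj_zero_of_strictMono (fun m => (hlr m).le) (u := e ∘ σ) ?_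
    fun p q hpq => (barGraph_adj.1 (e.map_adj_iff.2 (σ.injective.ne hpq))).2
  exact (Tuple.monotone_sort _).strictMono_of_injective ((hy.comp e.injective).comp σ.injective)

theorem not_isBarKVisibilityGraph_cycleGraph_four {k : ℕ} (hk : 1 ≤ k) :
    ¬ IsBarKVisibilityGraph k (SimpleGraph.cycleGraph 4) := by
  rintro ⟨n, l, r, y, -, -, ⟨e⟩⟩
  have adj : ∀ p q, (SimpleGraph.cycleGraph 4).Adj p q → barAdj k l r y (e p) (e q) :=
    fun p q h => (barGraph_adj.1 (e.map_adj_iff.2 h)).2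
  have nonadj : ∀ p q, p ≠ q → ¬ (SimpleGraph.cycleGraph 4).Adj p q →
      ¬ barAdj k l r y (e p) (e q) :=
    fun p q hpq h hpq' => h (e.map_adj_iff.1 (barGraph_adj.2 ⟨e.injective.ne hpq, hpq'⟩))
  have hall : ∀ m, m = e 0 ∨ m = e 2 ∨ m = e 1 ∨ m = e 3 := fun m => by
    obtain ⟨p, rfl⟩ := e.surjective m
    fin_cases p <;> simp
  rcases barAdj_or_barAdj_of_four_cycle hk hall (adj 0 1 (by decide)) (adj 0 3 (by decide))
    (adj 2 1 (by decide)) (adj 2 3 (by decide)) with h | h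
  exacts [nonadj 0 2 (by decide) (by decide) h, nonadj 1 3 (by decide) (by decide) h]

/-- For all `i, j ≥ 0`, the family of arc `j`-visibility graphs is not contained
in the family of bar `i`-visibility graphs. -/
theorem arc_not_contained_in_bar (i j : ℕ) :
    ∃ (n : ℕ) (G : SimpleGraph (Fin n)),
      IsArcKVisibilityGraph j G ∧ ¬ IsBarKVisibilityGraph i G := by
  rcases Nat.eq_zero_or_pos i with rfl | hi
  · exact ⟨5, ⊤, isArcKVisibilityGraph_top j, not_isBarKVisibilityGraph_zero_top⟩
  · exact ⟨4, SimpleGraph.cycleGraph 4, isArcKVisibilityGraph_cycleGraph_four j,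
      not_isBarKVisibilityGraph_cycleGraph_four hi⟩
end
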